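/- The image under δ of a Lagrangian class equals the canonical Euler–Lagrange representative: for a horizontal top form L·Dx (L a jet function), δ(L·Dx) ≡ Σ_μ Γ^μ · E_μ(L) · Dx modulo D(Ω^{1,m−1}), where E_μ(L) = Σ_σ (−1)^{|σ|} D_σ(∂L/∂φ^μ_σ). -/

import Mathlib

open scoped BigOperators

/-- Multi-indices over `Fin m`, recorded as exponent vectors (so automatically
symmetric in the order of the indices). -/
abbrev MIdx (m : ℕ) := Fin m → ℕ

/-- Points of the infinite jet space of the trivial bundle `ℝ^m × ℝ^n → ℝ^m`:
base coordinates `x^a` together with all jet coordinates `φ^μ_σ`. -/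
abbrev Jet (m n : ℕ) := (Fin m → ℝ) × ((Fin n × MIdx m) → ℝ)

/-- Names of the coordinates on jet space: either a base coordinate `x^a`
or a jet coordinate `φ^μ_σ`. -/
abbrev JCoord (m n : ℕ) := Fin m ⊕ (Fin n × MIdx m)

variable {m n : ℕ}

/-- Evaluate a coordinate at a point of jet space. -/
def jeval (p : Jet m n) : JCoord m n → ℝ
  | .inl a => p.1 a
  | .inr c => p.2 c

/-- Update one coordinate of a point of jet space. -/
def jupdate (p : Jet m n) : JCoord m n → ℝ → Jet m n
  | .inl a, t => (Function.update p.1 a t, p.2)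
  | .inr c, t => (p.1, Function.update p.2 c t)

/-- Partial derivative of a function on jet space with respect to one coordinate. -/
noncomputable def pd (c : JCoord m n) (f : Jet m n → ℝ) (p : Jet m n) : ℝ :=
  deriv (fun t => f (jupdate p c t)) (jeval p c)

/-- The total derivative `D_a = ∂/∂x^a + Σ_{μ,σ} φ^μ_{aσ} ∂/∂φ^μ_σ`. -/
noncomputable def totalD (a : Fin m) (f : Jet m n → ℝ) (p : Jet m n) : ℝ :=
  pd (.inl a) f p +
    ∑' c : Fin n × MIdx m, p.2 (c.1, c.2 + Pi.single a 1) * pd (.inr c) f p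

/-- A jet function: a smooth function depending on finitely many of the
coordinates `x^a, φ^μ_σ` (finite order). -/
def IsJetFun (f : Jet m n → ℝ) : Prop :=
  ∃ (N : ℕ) (c : Fin N → JCoord m n) (F : (Fin N → ℝ) → ℝ),
    ContDiff ℝ (⊤ : ℕ∞) F ∧ ∀ p, f p = F (fun i => jeval p (c i))

/-- The iterated total derivative `D_σ = D_1^{σ 1} ∘ … ∘ D_m^{σ m}`
(the order is irrelevant since total derivatives commute on jet functions). -/
noncomputable def Dmulti {m n : ℕ} (σ : MIdx m) (f : Jet m n → ℝ) : Jet m n → ℝ :=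
  (List.finRange m).foldr (fun a g => (totalD a)^[σ a] g) f

/-- The total degree `|σ|` of a multi-index. -/
def mdeg {m : ℕ} (σ : MIdx m) : ℕ := ∑ a, σ a

/-- The Euler operator (variational derivative)
`E_μ(L) = Σ_σ (−1)^{|σ|} D_σ (∂L/∂φ^μ_σ)`. -/
noncomputable def euler {m n : ℕ} (μ : Fin n) (L : Jet m n → ℝ) (p : Jet m n) : ℝ :=
  ∑' σ : MIdx m, (-1 : ℝ) ^ mdeg σ * Dmulti σ (pd (Sum.inr (μ, σ)) L) p

/-- A form `ω ∈ Ω^{1,m}`, `ω = Σ Γ^μ_σ B^σ_μ ∧ Dx`, is recorded by its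
coefficient family `B`. Similarly `τ ∈ Ω^{1,m−1}`, `τ = Σ Γ^μ_σ C^{σ,a}_μ ∧ Dx_a`,
is recorded by the family `C`. This is the coefficient family of the horizontal
differential `Dτ ∈ Ω^{1,m}` (computed from `D Γ^μ_σ = dx^a Γ^μ_{aσ}`,
`dx^a ∧ Dx_a = Dx`). -/
noncomputable def Dimg {m n : ℕ} (C : (Fin n × MIdx m) → Fin m → Jet m n → ℝ)
    (c : Fin n × MIdx m) (p : Jet m n) : ℝ :=
  ∑ a : Fin m,
    (-(if 1 ≤ c.2 a then C (c.1, c.2 - Pi.single a 1) a p else 0)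
      - totalD a (C c a) p)
section JetBasic
set_option linter.unusedSectionVars false
variable {m n : ℕ}

lemma jeval_jupdate (p : Jet m n) (d e : JCoord m n) (t : ℝ) :
    jeval (jupdate p d t) e = if e = d then t else jeval p e := by
  cases d with
  | inl a =>
    cases e with
    | inl b => simp [jupdate, jeval, Function.update_apply]
    | inr c => simp [jupdate, jeval]
  | inr c =>
    cases e with
    | inl b => simp [jupdate, jeval]
    | inr c' => simp [jupdate, jeval, Function.update_apply]

variable {ι : Type} [Fintype ι]

/-- evaluation of a coordinate family -/
def jev (c : ι → JCoord m n) (p : Jet m n) : ι → ℝ := fun i => jeval p (c i)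

/-- indicator vector of a coordinate -/
noncomputable def jind (c : ι → JCoord m n) (d : JCoord m n) : ι → ℝ :=
  fun i => if c i = d then 1 else 0

/-- a presentation of a function on jet space through finitely many coordinates -/
def IsPres (f : Jet m n → ℝ) (c : ι → JCoord m n) (F : (ι → ℝ) → ℝ) : Prop :=
  ContDiff ℝ (⊤ : ℕ∞) F ∧ ∀ p, f p = F (jev c p)

lemma jev_jupdate (c : ι → JCoord m n) (p : Jet m n) (d : JCoord m n) (t : ℝ) :
    jev c (jupdate p d t) = jev c p + (t - jeval p d) • jind c d := by
  funext i
  simp only [jev, jeval_jupdate, Pi.add_apply, Pi.smul_apply, jind, smul_eq_mul]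
  by_cases h : c i = d
  · simp only [h, if_pos rfl, if_true]
    ring
  · simp [h]

lemma hasDerivAt_presLine (c : ι → JCoord m n) {F : (ι → ℝ) → ℝ}
    (hF : Differentiable ℝ F) (p : Jet m n) (d : JCoord m n) :
    HasDerivAt (fun t => F (jev c (jupdate p d t)))
      (fderiv ℝ F (jev c p) (jind c d)) (jeval p d) := by
  have h1 : HasDerivAt (fun t : ℝ => jev c p + (t - jeval p d) • jind c d)
      (jind c d) (jeval p d) := by
    have := (((hasDerivAt_id (jeval p d)).sub_const (jeval p d)).smul_const
      (jind c d)).const_add (jev c p)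
    simpa using this
  have h2 := (hF _).hasFDerivAt.comp_hasDerivAt (jeval p d) h1
  simp only [jev_jupdate]
  rw [sub_self, zero_smul, add_zero] at h2
  exact h2

lemma IsPres.pd_eq {f : Jet m n → ℝ} {c : ι → JCoord m n} {F : (ι → ℝ) → ℝ}
    (h : IsPres f c F) (d : JCoord m n) (p : Jet m n) :
    pd d f p = fderiv ℝ F (jev c p) (jind c d) := by
  have : (fun t => f (jupdate p d t)) = fun t => F (jev c (jupdate p d t)) := by
    funext t; exact h.2 _
  rw [pd, this]
  exact (hasDerivAt_presLine c (h.1.differentiable (by simp)) p d).deriv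

lemma IsPres.hasDerivAt {f : Jet m n → ℝ} {c : ι → JCoord m n} {F : (ι → ℝ) → ℝ}
    (h : IsPres f c F) (d : JCoord m n) (p : Jet m n) :
    HasDerivAt (fun t => f (jupdate p d t)) (pd d f p) (jeval p d) := by
  have he : (fun t => f (jupdate p d t)) = fun t => F (jev c (jupdate p d t)) := by
    funext t; exact h.2 _
  rw [h.pd_eq d p, he]
  exact hasDerivAt_presLine c (h.1.differentiable (by simp)) p d

lemma IsPres.pd_isPres {f : Jet m n → ℝ} {c : ι → JCoord m n} {F : (ι → ℝ) → ℝ}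
    (h : IsPres f c F) (d : JCoord m n) :
    IsPres (pd d f) c (fun v => fderiv ℝ F v (jind c d)) := by
  constructor
  · have h1 : ContDiff ℝ (⊤ : ℕ∞) (fderiv ℝ F) := h.1.fderiv_right (by simp)
    exact (ContinuousLinearMap.apply ℝ ℝ (jind c d)).contDiff.comp h1
  · intro p; exact h.pd_eq d p

lemma IsPres.pd_eq_zero {f : Jet m n → ℝ} {c : ι → JCoord m n} {F : (ι → ℝ) → ℝ}
    (h : IsPres f c F) {d : JCoord m n} (hd : ∀ i, c i ≠ d) (p : Jet m n) :
    pd d f p = 0 := by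
  rw [h.pd_eq d p]
  have : jind c d = (0 : ι → ℝ) := by
    funext i; simp [jind, hd i]
  rw [this, map_zero]

end JetBasic

section JetClosure
variable {m n : ℕ} {ι : Type} [Fintype ι]
set_option linter.unusedSectionVars false

/-- reindexing continuous linear map -/
noncomputable def reindexCLM {κ : Type} [Fintype κ] (e : κ → ι) :
    (ι → ℝ) →L[ℝ] (κ → ℝ) :=
  ContinuousLinearMap.pi (fun k => ContinuousLinearMap.proj (e k))

lemma isJetFun_of_isPres {f : Jet m n → ℝ} {c : ι → JCoord m n} {F : (ι → ℝ) → ℝ}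
    (h : IsPres f c F) : IsJetFun f := by
  obtain ⟨hF, hfp⟩ := h
  let e := (Fintype.equivFin ι).symm
  refine ⟨Fintype.card ι, c ∘ e, F ∘ (reindexCLM (⇑e.symm) : ((Fin (Fintype.card ι) → ℝ)) →L[ℝ] (ι → ℝ)), ?_, ?_⟩
  · exact hF.comp (reindexCLM (⇑e.symm) : ((Fin (Fintype.card ι) → ℝ)) →L[ℝ] (ι → ℝ)).contDiff
  · intro p
    rw [hfp p]
    simp only [Function.comp_apply, reindexCLM, ContinuousLinearMap.pi_apply,
      ContinuousLinearMap.proj_apply]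
    congr 1
    funext i
    simp [jev, Function.comp]

lemma isJetFun_iff_pres {f : Jet m n → ℝ} :
    IsJetFun f ↔ ∃ (N : ℕ) (c : Fin N → JCoord m n) (F : (Fin N → ℝ) → ℝ), IsPres f c F := by
  constructor
  · rintro ⟨N, c, F, hF, hfp⟩; exact ⟨N, c, F, hF, hfp⟩
  · rintro ⟨N, c, F, hF, hfp⟩; exact ⟨N, c, F, hF, hfp⟩

lemma isJetFun_const (r : ℝ) : IsJetFun (fun _ : Jet m n => r) :=
  isJetFun_of_isPres (ι := Fin 0) (c := fun i => i.elim0)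
    (F := fun _ => r) ⟨contDiff_const, fun _ => rfl⟩

lemma isJetFun_zero : IsJetFun (fun _ : Jet m n => (0:ℝ)) := isJetFun_const 0

lemma isJetFun_coord (d : JCoord m n) : IsJetFun (fun p => jeval p d) :=
  isJetFun_of_isPres (ι := Fin 1) (c := fun _ => d) (F := fun v => v 0)
    ⟨(ContinuousLinearMap.proj (R := ℝ) (φ := fun _ : Fin 1 => ℝ) 0).contDiff,
      fun p => rfl⟩

lemma IsJetFun.add {f g : Jet m n → ℝ} (hf : IsJetFun f) (hg : IsJetFun g) :
    IsJetFun (fun p => f p + g p) := by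
  obtain ⟨N, c, F, hF, hfp⟩ := hf
  obtain ⟨M, c', G, hG, hgp⟩ := hg
  refine isJetFun_of_isPres (ι := Fin N ⊕ Fin M) (c := Sum.elim c c')
    (F := fun v => F (fun i => v (Sum.inl i)) + G (fun j => v (Sum.inr j))) ⟨?_, ?_⟩
  · exact (hF.comp (reindexCLM (ι := Fin N ⊕ Fin M) Sum.inl).contDiff).add
      (hG.comp (reindexCLM (ι := Fin N ⊕ Fin M) Sum.inr).contDiff)
  · intro p; show f p + g p = _; rw [hfp p, hgp p]; rfl

lemma IsJetFun.mul {f g : Jet m n → ℝ} (hf : IsJetFun f) (hg : IsJetFun g) :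
    IsJetFun (fun p => f p * g p) := by
  obtain ⟨N, c, F, hF, hfp⟩ := hf
  obtain ⟨M, c', G, hG, hgp⟩ := hg
  refine isJetFun_of_isPres (ι := Fin N ⊕ Fin M) (c := Sum.elim c c')
    (F := fun v => F (fun i => v (Sum.inl i)) * G (fun j => v (Sum.inr j))) ⟨?_, ?_⟩
  · exact (hF.comp (reindexCLM (ι := Fin N ⊕ Fin M) Sum.inl).contDiff).mul
      (hG.comp (reindexCLM (ι := Fin N ⊕ Fin M) Sum.inr).contDiff)
  · intro p; show f p * g p = _; rw [hfp p, hgp p]; rfl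

lemma IsJetFun.const_mul {f : Jet m n → ℝ} (hf : IsJetFun f) (r : ℝ) :
    IsJetFun (fun p => r * f p) := (isJetFun_const r).mul hf

lemma IsJetFun.pdFun {f : Jet m n → ℝ} (hf : IsJetFun f) (d : JCoord m n) :
    IsJetFun (pd d f) := by
  obtain ⟨N, c, F, h⟩ := isJetFun_iff_pres.mp hf
  exact isJetFun_of_isPres (h.pd_isPres d)

lemma IsJetFun.finsetSum {κ : Type*} (s : Finset κ) (f : κ → Jet m n → ℝ)
    (h : ∀ x ∈ s, IsJetFun (f x)) : IsJetFun (fun p => ∑ x ∈ s, f x p) := by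
  classical
  induction s using Finset.induction with
  | empty => simpa using isJetFun_zero
  | @insert x s' hx ih =>
    simp only [Finset.sum_insert hx]
    exact (h x (Finset.mem_insert_self x s')).add
      (ih (fun y hy => h y (Finset.mem_insert_of_mem hy)))

lemma IsJetFun.hasDerivAt {f : Jet m n → ℝ} (hf : IsJetFun f) (d : JCoord m n) (p : Jet m n) :
    HasDerivAt (fun t => f (jupdate p d t)) (pd d f p) (jeval p d) := by
  obtain ⟨N, c, F, h⟩ := isJetFun_iff_pres.mp hf
  exact h.hasDerivAt d p

end JetClosure

section TotalD
variable {m n : ℕ} {ι : Type} [Fintype ι]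
set_option linter.unusedSectionVars false
open Classical in
/-- shift of a jet coordinate index -/
def jsh (a : Fin m) (e : Fin n × MIdx m) : Fin n × MIdx m := (e.1, e.2 + Pi.single a 1)

lemma pd_zero_fun (d : JCoord m n) (p : Jet m n) : pd d (fun _ => (0:ℝ)) p = 0 := by
  simp [pd]

lemma pd_add {f g : Jet m n → ℝ} (hf : IsJetFun f) (hg : IsJetFun g) (d : JCoord m n)
    (p : Jet m n) : pd d (fun q => f q + g q) p = pd d f p + pd d g p :=
  ((hf.hasDerivAt d p).add (hg.hasDerivAt d p)).deriv

lemma pd_const_mul {f : Jet m n → ℝ} (hf : IsJetFun f) (r : ℝ) (d : JCoord m n)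
    (p : Jet m n) : pd d (fun q => r * f q) p = r * pd d f p :=
  ((hf.hasDerivAt d p).const_mul r).deriv

lemma pd_finsetSum {κ : Type*} (s : Finset κ) (f : κ → Jet m n → ℝ)
    (h : ∀ x ∈ s, IsJetFun (f x)) (d : JCoord m n) (p : Jet m n) :
    pd d (fun q => ∑ x ∈ s, f x q) p = ∑ x ∈ s, pd d (f x) p := by
  classical
  induction s using Finset.induction with
  | empty => simpa using pd_zero_fun d p
  | @insert x s' hx ih =>
    simp only [Finset.sum_insert hx]
    rw [pd_add (h x (Finset.mem_insert_self x s'))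
      (IsJetFun.finsetSum s' f (fun y hy => h y (Finset.mem_insert_of_mem hy))) d p,
      ih (fun y hy => h y (Finset.mem_insert_of_mem hy))]

/-- the finset of jet coordinates appearing in a presentation -/
noncomputable def presJets (c : ι → JCoord m n) : Finset (Fin n × MIdx m) := by
  classical
  exact (Finset.univ.image c).preimage Sum.inr (Sum.inr_injective.injOn)

lemma mem_presJets {c : ι → JCoord m n} {e : Fin n × MIdx m} {i : ι}
    (h : c i = Sum.inr e) : e ∈ presJets c := by
  classical
  simp only [presJets, Finset.mem_preimage, Finset.mem_image]
  exact ⟨i, Finset.mem_univ i, h⟩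

lemma IsPres.pd_inr_eq_zero {f : Jet m n → ℝ} {c : ι → JCoord m n} {F : (ι → ℝ) → ℝ}
    (h : IsPres f c F) {e : Fin n × MIdx m} (he : e ∉ presJets c) (p : Jet m n) :
    pd (Sum.inr e) f p = 0 := by
  refine h.pd_eq_zero (fun i hi => he (mem_presJets hi)) p

lemma IsPres.totalD_eq_sum {f : Jet m n → ℝ} {c : ι → JCoord m n} {F : (ι → ℝ) → ℝ}
    (h : IsPres f c F) (a : Fin m) (p : Jet m n) {E : Finset (Fin n × MIdx m)}
    (hE : presJets c ⊆ E) :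
    totalD a f p = pd (Sum.inl a) f p
      + ∑ e ∈ E, p.2 (jsh a e) * pd (Sum.inr e) f p := by
  rw [totalD]
  congr 1
  apply tsum_eq_sum
  intro e he
  rw [h.pd_inr_eq_zero (fun hmem => he (hE hmem)) p, mul_zero]

lemma IsPres.summable_totalD {f : Jet m n → ℝ} {c : ι → JCoord m n} {F : (ι → ℝ) → ℝ}
    (h : IsPres f c F) (a : Fin m) (p : Jet m n) :
    Summable (fun e : Fin n × MIdx m => p.2 (jsh a e) * pd (Sum.inr e) f p) := by
  apply summable_of_ne_finset_zero (s := presJets c)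
  intro e he
  rw [h.pd_inr_eq_zero he p, mul_zero]

lemma isJetFun_totalD {f : Jet m n → ℝ} (hf : IsJetFun f) (a : Fin m) :
    IsJetFun (totalD a f) := by
  classical
  obtain ⟨N, c, F, h⟩ := isJetFun_iff_pres.mp hf
  have heq : totalD a f = fun p => pd (Sum.inl a) f p
      + ∑ e ∈ presJets c, (fun q => jeval q (Sum.inr (jsh a e)) * pd (Sum.inr e) f q) p := by
    funext p
    exact h.totalD_eq_sum a p (le_refl _)
  rw [heq]
  exact (hf.pdFun (Sum.inl a)).add
    (IsJetFun.finsetSum _ _ (fun e _ => (isJetFun_coord _).mul (hf.pdFun _)))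

lemma totalD_zero_fun (a : Fin m) : totalD (n := n) a (fun _ => (0:ℝ)) = fun _ => 0 := by
  funext p
  rw [totalD]
  simp [pd_zero_fun]

lemma totalD_add {f g : Jet m n → ℝ} (hf : IsJetFun f) (hg : IsJetFun g) (a : Fin m)
    (p : Jet m n) :
    totalD a (fun q => f q + g q) p = totalD a f p + totalD a g p := by
  obtain ⟨N, c, F, h⟩ := isJetFun_iff_pres.mp hf
  obtain ⟨M, c', G, h'⟩ := isJetFun_iff_pres.mp hg
  have hsum : IsPres (fun q => f q + g q) (Sum.elim c c')
      (fun v => F (fun i => v (Sum.inl i)) + G (fun j => v (Sum.inr j))) := by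
    constructor
    · exact (h.1.comp (reindexCLM (ι := Fin N ⊕ Fin M) Sum.inl).contDiff).add
        (h'.1.comp (reindexCLM (ι := Fin N ⊕ Fin M) Sum.inr).contDiff)
    · intro q; show f q + g q = _; rw [h.2 q, h'.2 q]; rfl
  classical
  set E := presJets c ∪ presJets c' ∪ presJets (Sum.elim c c') with hEdef
  have h1 := h.totalD_eq_sum a p (E := E) (by intro x hx; exact Finset.mem_union_left _ (Finset.mem_union_left _ hx))
  have h2 := h'.totalD_eq_sum a p (E := E) (by intro x hx; exact Finset.mem_union_left _ (Finset.mem_union_right _ hx))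
  have h3 := hsum.totalD_eq_sum a p (E := E) (by intro x hx; exact Finset.mem_union_right _ hx)
  rw [h1, h2, h3, pd_add hf hg]
  have : ∀ e ∈ E, p.2 (jsh a e) * pd (Sum.inr e) (fun q => f q + g q) p
      = p.2 (jsh a e) * pd (Sum.inr e) f p + p.2 (jsh a e) * pd (Sum.inr e) g p := by
    intro e _
    rw [pd_add hf hg, mul_add]
  rw [Finset.sum_congr rfl this, Finset.sum_add_distrib]
  ring

lemma totalD_const_mul {f : Jet m n → ℝ} (hf : IsJetFun f) (r : ℝ) (a : Fin m)
    (p : Jet m n) : totalD a (fun q => r * f q) p = r * totalD a f p := by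
  obtain ⟨N, c, F, h⟩ := isJetFun_iff_pres.mp hf
  have hrf : IsPres (fun q => r * f q) c (fun v => r * F v) := by
    refine ⟨contDiff_const.mul h.1, fun q => by show r * f q = _; rw [h.2 q]⟩
  rw [h.totalD_eq_sum a p (le_refl _), hrf.totalD_eq_sum a p (le_refl _),
    pd_const_mul hf]
  have : ∀ e ∈ presJets c, p.2 (jsh a e) * pd (Sum.inr e) (fun q => r * f q) p
      = r * (p.2 (jsh a e) * pd (Sum.inr e) f p) := by
    intro e _; rw [pd_const_mul hf]; ring
  rw [Finset.sum_congr rfl this, ← Finset.mul_sum]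
  ring

lemma totalD_finsetSum {κ : Type*} (s : Finset κ) (f : κ → Jet m n → ℝ)
    (h : ∀ x ∈ s, IsJetFun (f x)) (a : Fin m) (p : Jet m n) :
    totalD a (fun q => ∑ x ∈ s, f x q) p = ∑ x ∈ s, totalD a (f x) p := by
  classical
  induction s using Finset.induction with
  | empty => simp only [Finset.sum_empty]; rw [show (fun _ : Jet m n => (0:ℝ)) = fun _ => 0 from rfl]; rw [totalD_zero_fun]
  | @insert x s' hx ih =>
    simp only [Finset.sum_insert hx]
    rw [totalD_add (h x (Finset.mem_insert_self x s'))
      (IsJetFun.finsetSum s' f (fun y hy => h y (Finset.mem_insert_of_mem hy))) a p,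
      ih (fun y hy => h y (Finset.mem_insert_of_mem hy))]

end TotalD

section Comm
variable {m n : ℕ} {ι : Type} [Fintype ι]
set_option linter.unusedSectionVars false
set_option maxHeartbeats 1000000

lemma IsPres.pd_comm {f : Jet m n → ℝ} {c : ι → JCoord m n} {F : (ι → ℝ) → ℝ}
    (h : IsPres f c F) (d e : JCoord m n) (p : Jet m n) :
    pd d (pd e f) p = pd e (pd d f) p := by
  have hd2 : Differentiable ℝ (fderiv ℝ F) :=
    (h.1.fderiv_right (m := (⊤ : ℕ∞)) (by simp)).differentiable (by simp)
  have hsymm := second_derivative_symmetric (f := F) (f' := fderiv ℝ F)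
    (f'' := fderiv ℝ (fderiv ℝ F) (jev c p))
    (fun y => ((h.1.differentiable (by simp)) y).hasFDerivAt)
    ((hd2 (jev c p)).hasFDerivAt)
  have key : ∀ w u : ι → ℝ, fderiv ℝ (fun v => fderiv ℝ F v w) (jev c p) u
      = fderiv ℝ (fderiv ℝ F) (jev c p) u w := by
    intro w u
    rw [fderiv_clm_apply (hd2 (jev c p)) (differentiableAt_const w)]
    simp
  rw [(h.pd_isPres e).pd_eq d p, (h.pd_isPres d).pd_eq e p, key, key, hsymm]

lemma jupdate_jeval (q : Jet m n) (d : JCoord m n) : jupdate q d (jeval q d) = q := by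
  cases d with
  | inl a => simp [jupdate, jeval, Function.update_eq_self]
  | inr e => simp [jupdate, jeval, Function.update_eq_self]

lemma jsh_comm (a b : Fin m) (e : Fin n × MIdx m) : jsh a (jsh b e) = jsh b (jsh a e) := by
  simp only [jsh]
  exact Prod.ext rfl (add_right_comm _ _ _)

lemma totalD_comm {f : Jet m n → ℝ} (hf : IsJetFun f) (a b : Fin m) (p : Jet m n) :
    totalD a (totalD b f) p = totalD b (totalD a f) p := by
  classical
  obtain ⟨N, c, F, h⟩ := isJetFun_iff_pres.mp hf
  set E := presJets c with hEdef
  have hjet : ∀ d : JCoord m n, IsJetFun (pd d f) := fun d => hf.pdFun d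
  have hT : ∀ b' : Fin m, totalD b' f = fun q => pd (Sum.inl b') f q
      + ∑ e ∈ E, jeval q (Sum.inr (jsh b' e)) * pd (Sum.inr e) f q := by
    intro b'; funext q; exact h.totalD_eq_sum b' q (le_refl _)
  -- partial derivatives of a total derivative
  have hpdT : ∀ (b' : Fin m) (d : JCoord m n) (q : Jet m n),
      pd d (totalD b' f) q = pd d (pd (Sum.inl b') f) q
        + ∑ e ∈ E, ((if (Sum.inr (jsh b' e) : JCoord m n) = d then (1:ℝ) else 0)
              * pd (Sum.inr e) f q
            + jeval q (Sum.inr (jsh b' e)) * pd d (pd (Sum.inr e) f) q) := by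
    intro b' d q
    have hco : ∀ e : Fin n × MIdx m,
        HasDerivAt (fun t => jeval (jupdate q d t) (Sum.inr (jsh b' e)))
          (if (Sum.inr (jsh b' e) : JCoord m n) = d then (1:ℝ) else 0) (jeval q d) := by
      intro e
      have heq : (fun t => jeval (jupdate q d t) (Sum.inr (jsh b' e)))
          = fun t => if (Sum.inr (jsh b' e) : JCoord m n) = d then t
              else jeval q (Sum.inr (jsh b' e)) := by
        funext t; rw [jeval_jupdate]
      rw [heq]
      split_ifs
      · exact hasDerivAt_id _
      · exact hasDerivAt_const _ _
    have hder : HasDerivAt (fun t => totalD b' f (jupdate q d t))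
        (pd d (pd (Sum.inl b') f) q
          + ∑ e ∈ E, ((if (Sum.inr (jsh b' e) : JCoord m n) = d then (1:ℝ) else 0)
                * pd (Sum.inr e) f q
              + jeval q (Sum.inr (jsh b' e)) * pd d (pd (Sum.inr e) f) q))
        (jeval q d) := by
      rw [hT b']
      have h1 : HasDerivAt (fun t => pd (Sum.inl b') f (jupdate q d t)
            + ∑ e ∈ E, jeval (jupdate q d t) (Sum.inr (jsh b' e))
              * pd (Sum.inr e) f (jupdate q d t))
          (pd d (pd (Sum.inl b') f) q
            + ∑ e ∈ E, ((if (Sum.inr (jsh b' e) : JCoord m n) = d then (1:ℝ) else 0)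
                  * pd (Sum.inr e) f (jupdate q d (jeval q d))
                + jeval (jupdate q d (jeval q d)) (Sum.inr (jsh b' e))
                  * pd d (pd (Sum.inr e) f) q)) (jeval q d) :=
        ((hjet (Sum.inl b')).hasDerivAt d q).add
          (HasDerivAt.fun_sum (fun e _ => ((hco e).mul ((hjet (Sum.inr e)).hasDerivAt d q))))
      rw [jupdate_jeval] at h1
      exact h1
    simp only [pd]
    exact hder.deriv
  -- the expansion of a double total derivative
  have expand : ∀ a' b' : Fin m, totalD a' (totalD b' f) p =
      pd (Sum.inl a') (pd (Sum.inl b') f) p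
      + ∑ e ∈ E, p.2 (jsh b' e) * pd (Sum.inl a') (pd (Sum.inr e) f) p
      + ∑ e ∈ E, p.2 (jsh a' e) * pd (Sum.inl b') (pd (Sum.inr e) f) p
      + ∑ e ∈ E, p.2 (jsh a' (jsh b' e)) * pd (Sum.inr e) f p
      + ∑ e' ∈ E, ∑ e ∈ E, p.2 (jsh a' e') * (p.2 (jsh b' e)
          * pd (Sum.inr e') (pd (Sum.inr e) f) p) := by
    intro a' b'
    set U : Finset (Fin n × MIdx m) := E ∪ E.image (jsh a') ∪ E.image (jsh b') with hU
    have hEU : E ⊆ U := fun x hx =>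
      Finset.mem_union_left _ (Finset.mem_union_left _ hx)
    have hmemb : ∀ e ∈ E, jsh b' e ∈ U := fun e he =>
      Finset.mem_union_right _ (Finset.mem_image_of_mem _ he)
    have step1 : totalD a' (totalD b' f) p = pd (Sum.inl a') (totalD b' f) p
        + ∑ e' ∈ U, p.2 (jsh a' e') * pd (Sum.inr e') (totalD b' f) p := by
      rw [totalD]
      congr 1
      apply tsum_eq_sum
      intro e' he'
      have h1 : pd (Sum.inr e') (pd (Sum.inl b') f) p = 0 :=
        (h.pd_isPres (Sum.inl b')).pd_inr_eq_zero (fun hmem => he' (hEU hmem)) p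
      have h2 : ∀ e ∈ E, ((if (Sum.inr (jsh b' e) : JCoord m n) = Sum.inr e' then (1:ℝ) else 0)
            * pd (Sum.inr e) f p
          + jeval p (Sum.inr (jsh b' e)) * pd (Sum.inr e') (pd (Sum.inr e) f) p) = 0 := by
        intro e he
        have hne : (Sum.inr (jsh b' e) : JCoord m n) ≠ Sum.inr e' := by
          intro hc
          exact he' ((Sum.inr.injEq _ _).mp hc ▸ hmemb e he)
        have h3 : pd (Sum.inr e') (pd (Sum.inr e) f) p = 0 :=
          (h.pd_isPres (Sum.inr e)).pd_inr_eq_zero (fun hmem => he' (hEU hmem)) p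
        rw [if_neg hne, h3, zero_mul, mul_zero, add_zero]
      rw [hpdT b' (Sum.inr e') p, h1, Finset.sum_eq_zero h2, add_zero, mul_zero]
    have hfirst : pd (Sum.inl a') (totalD b' f) p
        = pd (Sum.inl a') (pd (Sum.inl b') f) p
          + ∑ e ∈ E, p.2 (jsh b' e) * pd (Sum.inl a') (pd (Sum.inr e) f) p := by
      rw [hpdT b' (Sum.inl a') p]
      congr 1
      apply Finset.sum_congr rfl
      intro e _
      simp [jeval]
    have hS : ∑ e' ∈ U, p.2 (jsh a' e') * pd (Sum.inr e') (totalD b' f) p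
        = (∑ e' ∈ U, p.2 (jsh a' e') * pd (Sum.inr e') (pd (Sum.inl b') f) p)
        + (∑ e' ∈ U, ∑ e ∈ E, p.2 (jsh a' e')
            * ((if (Sum.inr (jsh b' e) : JCoord m n) = Sum.inr e' then (1:ℝ) else 0)
              * pd (Sum.inr e) f p))
        + (∑ e' ∈ U, ∑ e ∈ E, p.2 (jsh a' e')
            * (p.2 (jsh b' e) * pd (Sum.inr e') (pd (Sum.inr e) f) p)) := by
      rw [← Finset.sum_add_distrib, ← Finset.sum_add_distrib]
      apply Finset.sum_congr rfl
      intro e' _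
      rw [hpdT b' (Sum.inr e') p]
      simp only [jeval]
      rw [Finset.sum_add_distrib, mul_add, mul_add, Finset.mul_sum, Finset.mul_sum]
      ring
    have hA : ∑ e' ∈ U, p.2 (jsh a' e') * pd (Sum.inr e') (pd (Sum.inl b') f) p
        = ∑ e ∈ E, p.2 (jsh a' e) * pd (Sum.inl b') (pd (Sum.inr e) f) p := by
      rw [← Finset.sum_subset hEU (fun x _ hnx => by
        rw [(h.pd_isPres (Sum.inl b')).pd_inr_eq_zero hnx p, mul_zero])]
      apply Finset.sum_congr rfl
      intro e _
      rw [h.pd_comm]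
    have hB : (∑ e' ∈ U, ∑ e ∈ E, p.2 (jsh a' e')
          * ((if (Sum.inr (jsh b' e) : JCoord m n) = Sum.inr e' then (1:ℝ) else 0)
            * pd (Sum.inr e) f p))
        = ∑ e ∈ E, p.2 (jsh a' (jsh b' e)) * pd (Sum.inr e) f p := by
      rw [Finset.sum_comm]
      apply Finset.sum_congr rfl
      intro e he
      have : ∀ e' ∈ U, p.2 (jsh a' e')
          * ((if (Sum.inr (jsh b' e) : JCoord m n) = Sum.inr e' then (1:ℝ) else 0)
            * pd (Sum.inr e) f p)
          = if jsh b' e = e' then p.2 (jsh a' e') * pd (Sum.inr e) f p else 0 := by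
        intro e' _
        by_cases hc : jsh b' e = e'
        · rw [if_pos hc, if_pos (by rw [hc]), one_mul]
        · rw [if_neg hc, if_neg (by simpa using hc), zero_mul, mul_zero]
      rw [Finset.sum_congr rfl this, Finset.sum_ite_eq U (jsh b' e)
        (fun e' => p.2 (jsh a' e') * pd (Sum.inr e) f p), if_pos (hmemb e he)]
    have hC : (∑ e' ∈ U, ∑ e ∈ E, p.2 (jsh a' e')
          * (p.2 (jsh b' e) * pd (Sum.inr e') (pd (Sum.inr e) f) p))
        = ∑ e' ∈ E, ∑ e ∈ E, p.2 (jsh a' e')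
          * (p.2 (jsh b' e) * pd (Sum.inr e') (pd (Sum.inr e) f) p) := by
      rw [← Finset.sum_subset hEU (fun x _ hnx => Finset.sum_eq_zero (fun e _ => by
        rw [(h.pd_isPres (Sum.inr e)).pd_inr_eq_zero hnx p, mul_zero, mul_zero]))]
    rw [step1, hfirst, hS, hA, hB, hC]
    ring
  rw [expand a b, expand b a]
  have g1 : pd (Sum.inl a) (pd (Sum.inl b) f) p = pd (Sum.inl b) (pd (Sum.inl a) f) p :=
    h.pd_comm _ _ p
  have g4 : ∑ e ∈ E, p.2 (jsh a (jsh b e)) * pd (Sum.inr e) f p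
      = ∑ e ∈ E, p.2 (jsh b (jsh a e)) * pd (Sum.inr e) f p := by
    apply Finset.sum_congr rfl
    intro e _
    rw [jsh_comm]
  have g5 : ∑ e' ∈ E, ∑ e ∈ E, p.2 (jsh a e') * (p.2 (jsh b e)
        * pd (Sum.inr e') (pd (Sum.inr e) f) p)
      = ∑ e' ∈ E, ∑ e ∈ E, p.2 (jsh b e') * (p.2 (jsh a e)
        * pd (Sum.inr e') (pd (Sum.inr e) f) p) := by
    rw [Finset.sum_comm]
    apply Finset.sum_congr rfl
    intro e' _
    apply Finset.sum_congr rfl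
    intro e _
    rw [h.pd_comm (Sum.inr e) (Sum.inr e') p]
    ring
  rw [g1, g4, g5]
  ring

end Comm

section DmultiLemmas
variable {m n : ℕ}
set_option linter.unusedSectionVars false

lemma isJetFun_totalD_iter {f : Jet m n → ℝ} (hf : IsJetFun f) (a : Fin m) (k : ℕ) :
    IsJetFun ((totalD a)^[k] f) := by
  induction k with
  | zero => simpa using hf
  | succ k ih => rw [Function.iterate_succ_apply']; exact isJetFun_totalD ih a

lemma isJetFun_foldrD {f : Jet m n → ℝ} (hf : IsJetFun f) (σ : MIdx m) (l : List (Fin m)) :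
    IsJetFun (l.foldr (fun a g => (totalD a)^[σ a] g) f) := by
  induction l with
  | nil => simpa using hf
  | cons x l ih => exact isJetFun_totalD_iter ih x (σ x)

lemma isJetFun_dmulti {f : Jet m n → ℝ} (hf : IsJetFun f) (σ : MIdx m) :
    IsJetFun (Dmulti σ f) := isJetFun_foldrD hf σ _

lemma totalD_comm_fun {f : Jet m n → ℝ} (hf : IsJetFun f) (a b : Fin m) :
    totalD a (totalD b f) = totalD b (totalD a f) :=
  funext (totalD_comm hf a b)

lemma totalD_iterate_comm {f : Jet m n → ℝ} (hf : IsJetFun f) (a b : Fin m) (k : ℕ) :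
    totalD a ((totalD b)^[k] f) = (totalD b)^[k] (totalD a f) := by
  induction k with
  | zero => simp
  | succ k ih =>
    rw [Function.iterate_succ_apply', Function.iterate_succ_apply',
      totalD_comm_fun (isJetFun_totalD_iter hf b k) a b, ih]

lemma foldr_congr_midx {f : Jet m n → ℝ} (l : List (Fin m)) (σ τ : MIdx m)
    (h : ∀ a ∈ l, σ a = τ a) :
    l.foldr (fun a g => (totalD a)^[σ a] g) f = l.foldr (fun a g => (totalD a)^[τ a] g) f := by
  induction l with
  | nil => rfl
  | cons x l ih =>
    simp only [List.foldr_cons]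
    rw [ih (fun a ha => h a (List.mem_cons_of_mem x ha)), h x List.mem_cons_self]

lemma totalD_foldr {f : Jet m n → ℝ} (hf : IsJetFun f) (σ : MIdx m) (a : Fin m)
    (l : List (Fin m)) (hnd : l.Nodup) (hal : a ∈ l) :
    totalD a (l.foldr (fun b g => (totalD b)^[σ b] g) f)
      = l.foldr (fun b g => (totalD b)^[(σ + Pi.single a 1 : MIdx m) b] g) f := by
  induction l with
  | nil => simp at hal
  | cons x l ih =>
    have hnx : x ∉ l := (List.nodup_cons.mp hnd).1
    have hnd' : l.Nodup := (List.nodup_cons.mp hnd).2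
    simp only [List.foldr_cons]
    rcases List.mem_cons.mp hal with hax | hal'
    · subst hax
      have h1 : l.foldr (fun b g => (totalD b)^[(σ + Pi.single a 1 : MIdx m) b] g) f
          = l.foldr (fun b g => (totalD b)^[σ b] g) f :=
        foldr_congr_midx l _ _ (fun b hb => by
          have hba : b ≠ a := fun hc => hnx (hc ▸ hb)
          simp [Pi.single_eq_of_ne hba])
      rw [h1, show (σ + Pi.single a 1 : MIdx m) a = σ a + 1 from by simp,
        ← Function.iterate_succ_apply' (totalD a) (σ a)]
    · have hxa : x ≠ a := fun hc => hnx (hc ▸ hal')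
      rw [totalD_iterate_comm (isJetFun_foldrD hf σ l) a x (σ x), ih hnd' hal',
        show (σ + Pi.single a 1 : MIdx m) x = σ x from by simp [Pi.single_eq_of_ne hxa]]

lemma totalD_dmulti {f : Jet m n → ℝ} (hf : IsJetFun f) (a : Fin m) (σ : MIdx m) :
    totalD a (Dmulti σ f) = Dmulti (σ + Pi.single a 1) f := by
  rw [Dmulti, Dmulti]
  exact totalD_foldr hf σ a _ (List.nodup_finRange m) (List.mem_finRange a)

lemma foldr_zero_idx (f : Jet m n → ℝ) (l : List (Fin m)) :
    l.foldr (fun a g => (totalD a)^[(0 : MIdx m) a] g) f = f := by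
  induction l with
  | nil => rfl
  | cons x l ih => simpa using ih

lemma dmulti_zero_idx (f : Jet m n → ℝ) : Dmulti (0 : MIdx m) f = f :=
  foldr_zero_idx f _

lemma totalD_iter_zero_fun (a : Fin m) (k : ℕ) :
    (totalD (n := n) a)^[k] (fun _ => (0:ℝ)) = fun _ => 0 := by
  induction k with
  | zero => rfl
  | succ k ih => rw [Function.iterate_succ_apply', ih, totalD_zero_fun]

lemma foldr_zero_fun (σ : MIdx m) (l : List (Fin m)) :
    l.foldr (fun a g => (totalD (n := n) a)^[σ a] g) (fun _ => (0:ℝ)) = fun _ => 0 := by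
  induction l with
  | nil => rfl
  | cons x l ih => simp only [List.foldr_cons]; rw [ih, totalD_iter_zero_fun]

lemma dmulti_zero_fun (σ : MIdx m) : Dmulti (n := n) σ (fun _ => (0:ℝ)) = fun _ => 0 :=
  foldr_zero_fun σ _

end DmultiLemmas

section Comb
variable {m : ℕ}

/-- the coefficient in the horizontal homotopy -/
noncomputable def coefF (σ τ : MIdx m) (a : Fin m) : ℝ :=
  -((((σ a + τ a + 1) * (mdeg σ).factorial * (mdeg τ).factorial
      * ∏ i, (σ i + τ i).factorial : ℕ)) : ℝ)
    / ((((mdeg σ + mdeg τ + 1).factorial * (∏ i, (σ i).factorial)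
      * ∏ i, (τ i).factorial : ℕ)) : ℝ)

noncomputable def KL (σ τ : MIdx m) : ℝ :=
  ((((mdeg σ).factorial * (mdeg τ - 1).factorial * ∏ i, (σ i + τ i).factorial : ℕ)) : ℝ)
    / ((((mdeg σ + mdeg τ).factorial * (∏ i, (σ i).factorial)
      * ∏ i, (τ i).factorial : ℕ)) : ℝ)

noncomputable def KR (σ τ : MIdx m) : ℝ :=
  ((((mdeg σ - 1).factorial * (mdeg τ).factorial * ∏ i, (σ i + τ i).factorial : ℕ)) : ℝ)
    / ((((mdeg σ + mdeg τ).factorial * (∏ i, (σ i).factorial)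
      * ∏ i, (τ i).factorial : ℕ)) : ℝ)

lemma mdeg_eq_zero_iff (σ : MIdx m) : mdeg σ = 0 ↔ σ = 0 := by
  rw [mdeg, Finset.sum_eq_zero_iff]
  constructor
  · intro h; funext a; exact h a (Finset.mem_univ a)
  · intro h a _; rw [h]; rfl

lemma le_mdeg (σ : MIdx m) (a : Fin m) : σ a ≤ mdeg σ :=
  Finset.single_le_sum (fun _ _ => Nat.zero_le _) (Finset.mem_univ a)

lemma sub_single_apply_self (τ : MIdx m) (a : Fin m) :
    ((τ - Pi.single a 1 : MIdx m)) a = τ a - 1 := by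
  simp [Pi.sub_apply]

lemma sub_single_apply_ne (τ : MIdx m) {a b : Fin m} (h : b ≠ a) :
    ((τ - Pi.single a 1 : MIdx m)) b = τ b := by
  simp [Pi.sub_apply, Pi.single_eq_of_ne h]

lemma mdeg_sub_single {τ : MIdx m} {a : Fin m} (h : 1 ≤ τ a) :
    mdeg ((τ - Pi.single a 1 : MIdx m)) = mdeg τ - 1 := by
  have h1 := Finset.add_sum_erase Finset.univ ((τ - Pi.single a 1 : MIdx m)) (Finset.mem_univ a)
  have h2 := Finset.add_sum_erase Finset.univ τ (Finset.mem_univ a)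
  have h3 : ∑ x ∈ Finset.univ.erase a, ((τ - Pi.single a 1 : MIdx m)) x
      = ∑ x ∈ Finset.univ.erase a, τ x :=
    Finset.sum_congr rfl (fun x hx => sub_single_apply_ne τ (Finset.mem_erase.mp hx).1)
  rw [mdeg, mdeg, ← h1, ← h2, h3, sub_single_apply_self]
  omega

lemma prod_fact_ne_zero (τ : MIdx m) : (∏ i, (τ i).factorial) ≠ 0 :=
  Finset.prod_ne_zero_iff.mpr (fun i _ => (τ i).factorial_ne_zero)

lemma prod_split_left {σ τ : MIdx m} {a : Fin m} (h : 1 ≤ τ a) :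
    (∏ i, (σ i + τ i).factorial)
      = (σ a + τ a) * ∏ i, (σ i + ((τ - Pi.single a 1 : MIdx m)) i).factorial := by
  rw [← Finset.mul_prod_erase Finset.univ (fun i => (σ i + τ i).factorial) (Finset.mem_univ a)]
  conv_rhs => rw [← Finset.mul_prod_erase Finset.univ _ (Finset.mem_univ a)]
  have h3 : ∏ i ∈ Finset.univ.erase a, (σ i + ((τ - Pi.single a 1 : MIdx m)) i).factorial
      = ∏ i ∈ Finset.univ.erase a, (σ i + τ i).factorial :=
    Finset.prod_congr rfl (fun i hi => by rw [sub_single_apply_ne τ (Finset.mem_erase.mp hi).1])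
  rw [h3, ← mul_assoc]
  congr 1
  rw [sub_single_apply_self]
  have h4 : σ a + (τ a - 1) = σ a + τ a - 1 := by omega
  rw [h4, Nat.mul_factorial_pred (by omega)]

lemma prod_split_one {τ : MIdx m} {a : Fin m} (h : 1 ≤ τ a) :
    (∏ i, (τ i).factorial) = τ a * ∏ i, (((τ - Pi.single a 1 : MIdx m)) i).factorial := by
  have := prod_split_left (σ := (0 : MIdx m)) h
  simpa using this

lemma prod_split_right {σ τ : MIdx m} {a : Fin m} (h : 1 ≤ σ a) :
    (∏ i, (σ i + τ i).factorial)
      = (σ a + τ a) * ∏ i, (((σ - Pi.single a 1 : MIdx m)) i + τ i).factorial := by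
  have h1 : (∏ i, (σ i + τ i).factorial) = ∏ i, (τ i + σ i).factorial := by
    apply Finset.prod_congr rfl; intro i _; rw [add_comm]
  have h2 : (∏ i, (((σ - Pi.single a 1 : MIdx m)) i + τ i).factorial)
      = ∏ i, (τ i + ((σ - Pi.single a 1 : MIdx m)) i).factorial := by
    apply Finset.prod_congr rfl; intro i _; rw [add_comm]
  rw [h1, h2, prod_split_left (σ := τ) h, add_comm (τ a) (σ a)]

lemma coefF_left {σ τ : MIdx m} {a : Fin m} (h : 1 ≤ τ a) :
    coefF σ ((τ - Pi.single a 1 : MIdx m)) a = -(τ a : ℝ) * KL σ τ := by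
  have ht1 : 1 ≤ mdeg τ := le_trans h (le_mdeg τ a)
  rw [coefF, KL, mdeg_sub_single h, sub_single_apply_self]
  have e1 : σ a + (τ a - 1) + 1 = σ a + τ a := by omega
  have e2 : mdeg σ + (mdeg τ - 1) + 1 = mdeg σ + mdeg τ := by omega
  rw [e1, e2, prod_split_left (σ := σ) h, prod_split_one h]
  have hτa : ((τ a : ℕ) : ℝ) ≠ 0 := Nat.cast_ne_zero.mpr (by omega)
  have hd1 : (((mdeg σ + mdeg τ).factorial : ℕ) : ℝ) ≠ 0 :=
    Nat.cast_ne_zero.mpr (Nat.factorial_ne_zero _)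
  have hd2 : ((∏ i, (σ i).factorial : ℕ) : ℝ) ≠ 0 := Nat.cast_ne_zero.mpr (prod_fact_ne_zero σ)
  have hd3 : ((∏ i, (((τ - Pi.single a 1 : MIdx m)) i).factorial : ℕ) : ℝ) ≠ 0 :=
    Nat.cast_ne_zero.mpr (prod_fact_ne_zero _)
  push_cast
  field_simp

lemma coefF_right {σ τ : MIdx m} {a : Fin m} (h : 1 ≤ σ a) :
    coefF ((σ - Pi.single a 1 : MIdx m)) τ a = -(σ a : ℝ) * KR σ τ := by
  have hs1 : 1 ≤ mdeg σ := le_trans h (le_mdeg σ a)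
  rw [coefF, KR, mdeg_sub_single h, sub_single_apply_self]
  have e1 : σ a - 1 + τ a + 1 = σ a + τ a := by omega
  have e2 : mdeg σ - 1 + mdeg τ + 1 = mdeg σ + mdeg τ := by omega
  rw [e1, e2, prod_split_right (τ := τ) h, prod_split_one h]
  have hσa : ((σ a : ℕ) : ℝ) ≠ 0 := Nat.cast_ne_zero.mpr (by omega)
  have hd1 : (((mdeg σ + mdeg τ).factorial : ℕ) : ℝ) ≠ 0 :=
    Nat.cast_ne_zero.mpr (Nat.factorial_ne_zero _)
  have hd2 : ((∏ i, (τ i).factorial : ℕ) : ℝ) ≠ 0 := Nat.cast_ne_zero.mpr (prod_fact_ne_zero τ)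
  have hd3 : ((∏ i, (((σ - Pi.single a 1 : MIdx m)) i).factorial : ℕ) : ℝ) ≠ 0 :=
    Nat.cast_ne_zero.mpr (prod_fact_ne_zero _)
  push_cast
  field_simp

lemma KL_mul {σ τ : MIdx m} (ht : 1 ≤ mdeg τ) :
    ((mdeg τ : ℕ) : ℝ) * KL σ τ
      = (((mdeg σ).factorial * (mdeg τ).factorial * ∏ i, (σ i + τ i).factorial : ℕ) : ℝ)
        / ((((mdeg σ + mdeg τ).factorial * (∏ i, (σ i).factorial)
          * ∏ i, (τ i).factorial : ℕ)) : ℝ) := by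
  rw [KL, mul_div_assoc']
  congr 1
  norm_cast
  calc mdeg τ * ((mdeg σ).factorial * (mdeg τ - 1).factorial * ∏ i, (σ i + τ i).factorial)
      = (mdeg τ * (mdeg τ - 1).factorial)
          * ((mdeg σ).factorial * ∏ i, (σ i + τ i).factorial) := by ring
    _ = (mdeg σ).factorial * (mdeg τ).factorial * ∏ i, (σ i + τ i).factorial := by
        rw [Nat.mul_factorial_pred (by omega)]; ring

lemma KR_mul {σ τ : MIdx m} (hs : 1 ≤ mdeg σ) :
    ((mdeg σ : ℕ) : ℝ) * KR σ τ
      = (((mdeg σ).factorial * (mdeg τ).factorial * ∏ i, (σ i + τ i).factorial : ℕ) : ℝ)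
        / ((((mdeg σ + mdeg τ).factorial * (∏ i, (σ i).factorial)
          * ∏ i, (τ i).factorial : ℕ)) : ℝ) := by
  rw [KR, mul_div_assoc']
  congr 1
  norm_cast
  calc mdeg σ * ((mdeg σ - 1).factorial * (mdeg τ).factorial * ∏ i, (σ i + τ i).factorial)
      = (mdeg σ * (mdeg σ - 1).factorial)
          * ((mdeg τ).factorial * ∏ i, (σ i + τ i).factorial) := by ring
    _ = (mdeg σ).factorial * (mdeg τ).factorial * ∏ i, (σ i + τ i).factorial := by
        rw [Nat.mul_factorial_pred (by omega)]; ring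

lemma key_comb (σ τ : MIdx m) :
    ∑ a : Fin m, ((if 1 ≤ τ a then coefF σ ((τ - Pi.single a 1 : MIdx m)) a else 0)
        - (if 1 ≤ σ a then coefF ((σ - Pi.single a 1 : MIdx m)) τ a else 0))
      = (if τ = 0 then (1:ℝ) else 0) - (if σ = 0 then (1:ℝ) else 0) := by
  have hτ : ∀ a, (if 1 ≤ τ a then coefF σ ((τ - Pi.single a 1 : MIdx m)) a else 0)
      = -(τ a : ℝ) * KL σ τ := by
    intro a
    by_cases h : 1 ≤ τ a
    · rw [if_pos h, coefF_left h]
    · rw [if_neg h]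
      have : τ a = 0 := by omega
      rw [this]; simp
  have hσ : ∀ a, (if 1 ≤ σ a then coefF ((σ - Pi.single a 1 : MIdx m)) τ a else 0)
      = -(σ a : ℝ) * KR σ τ := by
    intro a
    by_cases h : 1 ≤ σ a
    · rw [if_pos h, coefF_right h]
    · rw [if_neg h]
      have : σ a = 0 := by omega
      rw [this]; simp
  simp only [hτ, hσ]
  rw [Finset.sum_sub_distrib, ← Finset.sum_mul, ← Finset.sum_mul]
  have hTc : (∑ i : Fin m, -((τ i : ℕ) : ℝ)) = -((mdeg τ : ℕ) : ℝ) := by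
    rw [mdeg]; push_cast; rw [← Finset.sum_neg_distrib]
  have hSc : (∑ i : Fin m, -((σ i : ℕ) : ℝ)) = -((mdeg σ : ℕ) : ℝ) := by
    rw [mdeg]; push_cast; rw [← Finset.sum_neg_distrib]
  rw [hTc, hSc]
  have h0 : mdeg (0 : MIdx m) = 0 := (mdeg_eq_zero_iff _).mpr rfl
  by_cases hτ0 : τ = 0 <;> by_cases hσ0 : σ = 0
  · subst hτ0; subst hσ0
    rw [h0]
    simp
  · -- τ = 0, σ ≠ 0
    subst hτ0
    have hs : 1 ≤ mdeg σ :=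
      Nat.one_le_iff_ne_zero.mpr (fun hc => hσ0 ((mdeg_eq_zero_iff σ).mp hc))
    have hKR : ((mdeg σ : ℕ) : ℝ) * KR σ 0 = 1 := by
      rw [KR_mul hs]
      rw [div_eq_one_iff_eq (Nat.cast_ne_zero.mpr
        (Nat.mul_ne_zero (Nat.mul_ne_zero (Nat.factorial_ne_zero _) (prod_fact_ne_zero σ))
          (prod_fact_ne_zero 0)))]
      norm_cast
      simp [h0]
    rw [h0]
    simp only [Nat.cast_zero, neg_zero, zero_mul, zero_sub, hσ0, if_false, if_true, eq_self_iff_true]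
    linarith [hKR]
  · -- σ = 0, τ ≠ 0
    subst hσ0
    have ht : 1 ≤ mdeg τ :=
      Nat.one_le_iff_ne_zero.mpr (fun hc => hτ0 ((mdeg_eq_zero_iff τ).mp hc))
    have hKL : ((mdeg τ : ℕ) : ℝ) * KL 0 τ = 1 := by
      rw [KL_mul ht]
      rw [div_eq_one_iff_eq (Nat.cast_ne_zero.mpr
        (Nat.mul_ne_zero (Nat.mul_ne_zero (Nat.factorial_ne_zero _) (prod_fact_ne_zero 0))
          (prod_fact_ne_zero τ)))]
      norm_cast
      simp [h0]
    rw [h0]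
    simp only [Nat.cast_zero, neg_zero, zero_mul, sub_zero, hτ0, if_false, if_true, eq_self_iff_true]
    linarith [hKL]
  · -- both nonzero
    have ht : 1 ≤ mdeg τ :=
      Nat.one_le_iff_ne_zero.mpr (fun hc => hτ0 ((mdeg_eq_zero_iff τ).mp hc))
    have hs : 1 ≤ mdeg σ :=
      Nat.one_le_iff_ne_zero.mpr (fun hc => hσ0 ((mdeg_eq_zero_iff σ).mp hc))
    have hfin : ((mdeg τ : ℕ) : ℝ) * KL σ τ = ((mdeg σ : ℕ) : ℝ) * KR σ τ := by
      rw [KL_mul ht, KR_mul hs]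
    simp only [hτ0, hσ0, if_false]
    linarith [hfin]

end Comb

section MIdxArith
variable {m : ℕ}

lemma midx_le_def {σ ρ : MIdx m} : σ ≤ ρ ↔ ∀ i, σ i ≤ ρ i := Pi.le_def

lemma midx_single_le_self (σ : MIdx m) {a i : Fin m} (h : 1 ≤ σ a) :
    (Pi.single a 1 : MIdx m) i ≤ σ i := by
  by_cases hi : i = a
  · subst hi; simpa using h
  · simp [Pi.single_eq_of_ne hi]

lemma midx_sub_add_cancel {σ : MIdx m} {a : Fin m} (h : 1 ≤ σ a) :
    (σ - Pi.single a 1 : MIdx m) + Pi.single a 1 = σ := by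
  funext i
  have := midx_single_le_self σ (i := i) h
  simp only [Pi.add_apply, Pi.sub_apply]
  omega

lemma midx_sub_sub_eq {ρ σ : MIdx m} {a : Fin m} (h : 1 ≤ σ a) :
    ρ - (σ - Pi.single a 1 : MIdx m) - Pi.single a 1 = ρ - σ := by
  funext i
  have := midx_single_le_self σ (i := i) h
  simp only [Pi.sub_apply]
  omega

lemma midx_add_le_iff {σ ρ : MIdx m} {a : Fin m} (hle : σ ≤ ρ) :
    σ + Pi.single a 1 ≤ ρ ↔ 1 ≤ (ρ - σ) a := by
  constructor
  · intro h
    have ha := Pi.le_def.mp h a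
    simp only [Pi.add_apply, Pi.single_eq_same] at ha
    simp only [Pi.sub_apply]
    omega
  · intro h
    refine Pi.le_def.mpr (fun i => ?_)
    have hi := Pi.le_def.mp hle i
    simp only [Pi.sub_apply] at h
    by_cases hia : i = a
    · subst hia
      simp only [Pi.add_apply, Pi.single_eq_same]
      omega
    · simp only [Pi.add_apply, Pi.single_eq_of_ne hia]
      omega

lemma midx_sub_sub_add_cancel {σ ρ : MIdx m} {a : Fin m} (h : σ + Pi.single a 1 ≤ ρ) :
    (ρ - σ - Pi.single a 1 : MIdx m) + Pi.single a 1 = ρ - σ := by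
  funext i
  have hi := Pi.le_def.mp h i
  simp only [Pi.add_apply, Pi.sub_apply] at *
  omega

lemma midx_add_le_implies_le {σ ρ : MIdx m} {a : Fin m} (h : σ + Pi.single a 1 ≤ ρ) :
    σ ≤ ρ := by
  refine Pi.le_def.mpr (fun i => ?_)
  have hi := Pi.le_def.mp h i
  simp only [Pi.add_apply] at hi
  omega

lemma midx_sub_eq_zero_iff {σ ρ : MIdx m} (h : σ ≤ ρ) : ρ - σ = 0 ↔ ρ = σ := by
  constructor
  · intro h0
    funext i
    have h0i : (ρ - σ) i = 0 := by rw [h0]; rfl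
    have hi := Pi.le_def.mp h i
    simp only [Pi.sub_apply] at h0i
    omega
  · intro h0; subst h0; funext i; simp only [Pi.sub_apply, Pi.zero_apply]; omega

lemma midx_zero_le (ρ : MIdx m) : (0 : MIdx m) ≤ ρ := Pi.le_def.mpr (fun i => Nat.zero_le _)

lemma midx_sub_zero (ρ : MIdx m) : ρ - (0 : MIdx m) = ρ := by
  funext i; simp only [Pi.sub_apply, Pi.zero_apply]; omega

lemma neg_one_pow_sub_single {τ : MIdx m} {a : Fin m} (h : 1 ≤ τ a) :
    (-1 : ℝ) ^ (mdeg ((τ - Pi.single a 1 : MIdx m))) = -(-1 : ℝ) ^ (mdeg τ) := by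
  rw [mdeg_sub_single h]
  have ht : 1 ≤ mdeg τ := le_trans h (le_mdeg τ a)
  have : mdeg τ = (mdeg τ - 1) + 1 := by omega
  rw [this]
  rw [pow_succ]
  simp

end MIdxArith

set_option maxHeartbeats 2000000 in
/-- for a Lagrangian `L·Dx`, the class of
`δ(L·Dx) = Σ Γ^μ_σ (∂L/∂φ^μ_σ) Dx` modulo `D(Ω^{1,m−1})` equals the canonical
Euler–Lagrange representative `Σ_μ Γ^μ E_μ(L) Dx`. -/
theorem delta_lagrangian_euler {m n : ℕ} (L : Jet m n → ℝ) (hL : IsJetFun L) :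
    ∃ C : (Fin n × MIdx m) → Fin m → Jet m n → ℝ,
      (∀ c b, IsJetFun (C c b)) ∧
      {q : (Fin n × MIdx m) × Fin m | C q.1 q.2 ≠ 0}.Finite ∧
      ∀ (c : Fin n × MIdx m) (p : Jet m n),
        pd (Sum.inr c) L p - (if c.2 = 0 then euler c.1 L p else 0) =
          Dimg C c p := by
  classical
  obtain ⟨N, cL, F, hp⟩ := isJetFun_iff_pres.mp hL
  set S : Finset (Fin n × MIdx m) := presJets cL with hSdef
  set B : (Fin n × MIdx m) → Jet m n → ℝ := fun ρ => pd (Sum.inr ρ) L with hBdef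
  have hBjet : ∀ ρ, IsJetFun (B ρ) := fun ρ => hL.pdFun _
  have hB0 : ∀ ρ, ρ ∉ S → B ρ = fun _ => 0 :=
    fun ρ hρ => funext (fun q => hp.pd_inr_eq_zero hρ q)
  set C : (Fin n × MIdx m) → Fin m → Jet m n → ℝ := fun c a q =>
    ∑ ρ ∈ S, if ρ.1 = c.1 ∧ c.2 + Pi.single a 1 ≤ ρ.2 then
        coefF c.2 (ρ.2 - c.2 - Pi.single a 1) a
          * (-1 : ℝ) ^ (mdeg (ρ.2 - c.2 - Pi.single a 1))
          * Dmulti (ρ.2 - c.2 - Pi.single a 1) (B ρ) q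
      else 0 with hCdef
  have hsummand_jet : ∀ (c' : Fin n × MIdx m) (a : Fin m) (ρ : Fin n × MIdx m),
      IsJetFun (fun q => if ρ.1 = c'.1 ∧ c'.2 + Pi.single a 1 ≤ ρ.2 then
          coefF c'.2 (ρ.2 - c'.2 - Pi.single a 1) a
            * (-1 : ℝ) ^ (mdeg (ρ.2 - c'.2 - Pi.single a 1))
            * Dmulti (ρ.2 - c'.2 - Pi.single a 1) (B ρ) q
        else 0) := by
    intro c' a ρ
    by_cases hcond : ρ.1 = c'.1 ∧ c'.2 + Pi.single a 1 ≤ ρ.2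
    · simp only [if_pos hcond]
      exact (isJetFun_dmulti (hBjet ρ) _).const_mul _
    · simp only [if_neg hcond]
      exact isJetFun_zero
  refine ⟨C, ?_, ?_, ?_⟩
  · -- each C c b is a jet function
    intro c a
    rw [hCdef]
    exact IsJetFun.finsetSum S _ (fun ρ _ => hsummand_jet c a ρ)
  · -- finite support
    apply Set.Finite.subset (s := ⋃ ρ ∈ (S : Set (Fin n × MIdx m)),
      ((fun x : MIdx m × Fin m => (((ρ.1, x.1) : Fin n × MIdx m), x.2)) ''
        ({σ : MIdx m | σ ≤ ρ.2} ×ˢ (Set.univ : Set (Fin m)))))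
    · apply Set.Finite.biUnion S.finite_toSet
      intro ρ _
      apply Set.Finite.image
      apply Set.Finite.prod _ Set.finite_univ
      have hsub : {σ : MIdx m | σ ≤ ρ.2} ⊆ Set.pi Set.univ (fun i => Set.Iic (ρ.2 i)) := by
        intro σ hσ i _
        exact Pi.le_def.mp hσ i
      exact (Set.Finite.pi (fun i => Set.finite_Iic _)).subset hsub
    · intro q hq
      have hex : ∃ ρ ∈ S, ρ.1 = q.1.1 ∧ q.1.2 + Pi.single q.2 1 ≤ ρ.2 := by
        by_contra hno
        push_neg at hno
        apply hq
        funext x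
        rw [hCdef]
        apply Finset.sum_eq_zero
        intro ρ hρ
        rw [if_neg]
        intro hcond
        exact absurd hcond.2 (hno ρ hρ hcond.1)
      obtain ⟨ρ, hρS, hρ1, hρ2⟩ := hex
      refine Set.mem_biUnion hρS ?_
      refine ⟨(q.1.2, q.2), ⟨midx_add_le_implies_le hρ2, Set.mem_univ _⟩, ?_⟩
      simp only
      rw [hρ1]
  · -- the main identity
    intro c p
    -- expansion of totalD applied to C c a
    have hDC : ∀ a : Fin m, totalD a (C c a) p
        = ∑ ρ ∈ S, (if ρ.1 = c.1 ∧ c.2 + Pi.single a 1 ≤ ρ.2 then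
            coefF c.2 (ρ.2 - c.2 - Pi.single a 1) a
              * (-1 : ℝ) ^ (mdeg (ρ.2 - c.2 - Pi.single a 1))
              * Dmulti (ρ.2 - c.2) (B ρ) p
          else 0) := by
      intro a
      rw [hCdef]
      rw [totalD_finsetSum S _ (fun ρ _ => hsummand_jet c a ρ) a p]
      apply Finset.sum_congr rfl
      intro ρ _
      by_cases hcond : ρ.1 = c.1 ∧ c.2 + Pi.single a 1 ≤ ρ.2
      · simp only [if_pos hcond]
        rw [totalD_const_mul (isJetFun_dmulti (hBjet ρ) _) _ a p]
        rw [congrFun (totalD_dmulti (hBjet ρ) a _) p]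
        rw [midx_sub_sub_add_cancel hcond.2]
      · simp only [if_neg hcond]
        exact congrFun (totalD_zero_fun a) p
    -- expansion of the shifted coefficient
    have hCneg : ∀ a : Fin m, (if 1 ≤ c.2 a then C (c.1, c.2 - Pi.single a 1) a p else 0)
        = ∑ ρ ∈ S, (if 1 ≤ c.2 a ∧ ρ.1 = c.1 ∧ c.2 ≤ ρ.2 then
            coefF (c.2 - Pi.single a 1) (ρ.2 - c.2) a
              * (-1 : ℝ) ^ (mdeg (ρ.2 - c.2))
              * Dmulti (ρ.2 - c.2) (B ρ) p
          else 0) := by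
      intro a
      by_cases ha : 1 ≤ c.2 a
      · rw [if_pos ha, hCdef]
        simp only
        apply Finset.sum_congr rfl
        intro ρ _
        rw [midx_sub_add_cancel ha, midx_sub_sub_eq ha]
        by_cases hcond : ρ.1 = c.1 ∧ c.2 ≤ ρ.2
        · rw [if_pos hcond, if_pos ⟨ha, hcond⟩]
        · rw [if_neg hcond, if_neg (by tauto)]
      · rw [if_neg ha]
        symm
        apply Finset.sum_eq_zero
        intro ρ _
        rw [if_neg (by tauto)]
    -- per-ρ evaluation
    have hper : ∀ ρ ∈ S,
        (∑ a : Fin m, (-(if 1 ≤ c.2 a ∧ ρ.1 = c.1 ∧ c.2 ≤ ρ.2 then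
            coefF (c.2 - Pi.single a 1) (ρ.2 - c.2) a
              * (-1 : ℝ) ^ (mdeg (ρ.2 - c.2))
              * Dmulti (ρ.2 - c.2) (B ρ) p
          else 0)
          - (if ρ.1 = c.1 ∧ c.2 + Pi.single a 1 ≤ ρ.2 then
            coefF c.2 (ρ.2 - c.2 - Pi.single a 1) a
              * (-1 : ℝ) ^ (mdeg (ρ.2 - c.2 - Pi.single a 1))
              * Dmulti (ρ.2 - c.2) (B ρ) p
          else 0)))
        = (if ρ.1 = c.1 then ((if ρ.2 = c.2 then B ρ p else 0)
            - (if c.2 = 0 then (-1 : ℝ) ^ (mdeg ρ.2) * Dmulti ρ.2 (B ρ) p else 0)) else 0) := by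
      intro ρ _
      by_cases hρμ : ρ.1 = c.1
      swap
      · rw [if_neg hρμ]
        apply Finset.sum_eq_zero
        intro a _
        rw [if_neg (by tauto), if_neg (by tauto)]
        ring
      by_cases hle : c.2 ≤ ρ.2
      swap
      · rw [if_pos hρμ, if_neg (fun hc : ρ.2 = c.2 => hle (by rw [hc])),
          if_neg (fun hc : c.2 = 0 => hle (by rw [hc]; exact midx_zero_le ρ.2))]
        rw [sub_zero]
        apply Finset.sum_eq_zero
        intro a _
        rw [if_neg (by tauto), if_neg (fun hc => hle (midx_add_le_implies_le hc.2))]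
        ring
      -- main case : ρ.1 = c.1 and c.2 ≤ ρ.2
      have hterm : ∀ a : Fin m,
          (-(if 1 ≤ c.2 a ∧ ρ.1 = c.1 ∧ c.2 ≤ ρ.2 then
              coefF (c.2 - Pi.single a 1) (ρ.2 - c.2) a
                * (-1 : ℝ) ^ (mdeg (ρ.2 - c.2))
                * Dmulti (ρ.2 - c.2) (B ρ) p
            else 0)
            - (if ρ.1 = c.1 ∧ c.2 + Pi.single a 1 ≤ ρ.2 then
              coefF c.2 (ρ.2 - c.2 - Pi.single a 1) a
                * (-1 : ℝ) ^ (mdeg (ρ.2 - c.2 - Pi.single a 1))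
                * Dmulti (ρ.2 - c.2) (B ρ) p
            else 0))
          = ((if 1 ≤ (ρ.2 - c.2) a then coefF c.2 (ρ.2 - c.2 - Pi.single a 1) a else 0)
              - (if 1 ≤ c.2 a then coefF (c.2 - Pi.single a 1) (ρ.2 - c.2) a else 0))
            * ((-1 : ℝ) ^ (mdeg (ρ.2 - c.2)) * Dmulti (ρ.2 - c.2) (B ρ) p) := by
        intro a
        have hc1 : (1 ≤ c.2 a ∧ ρ.1 = c.1 ∧ c.2 ≤ ρ.2) ↔ 1 ≤ c.2 a := by tauto
        have hc2 : (ρ.1 = c.1 ∧ c.2 + Pi.single a 1 ≤ ρ.2) ↔ 1 ≤ (ρ.2 - c.2) a := by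
          rw [midx_add_le_iff hle]; tauto
        rw [if_congr hc1 rfl rfl, if_congr hc2 rfl rfl]
        by_cases h1 : 1 ≤ c.2 a <;> by_cases h2 : 1 ≤ (ρ.2 - c.2) a
        · rw [if_pos h1, if_pos h2, if_pos h1, if_pos h2, neg_one_pow_sub_single h2]
          ring
        · rw [if_pos h1, if_neg h2, if_pos h1, if_neg h2]
          ring
        · rw [if_neg h1, if_pos h2, if_neg h1, if_pos h2, neg_one_pow_sub_single h2]
          ring
        · rw [if_neg h1, if_neg h2, if_neg h1, if_neg h2]
          ring
      rw [Finset.sum_congr rfl (fun a _ => hterm a), ← Finset.sum_mul, key_comb c.2 (ρ.2 - c.2)]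
      rw [if_pos hρμ]
      by_cases hτ0 : ρ.2 - c.2 = 0
      · have hρσ : ρ.2 = c.2 := (midx_sub_eq_zero_iff hle).mp hτ0
        rw [if_pos hρσ, hτ0, if_pos rfl]
        have hmz : mdeg (0 : MIdx m) = 0 := (mdeg_eq_zero_iff _).mpr rfl
        rw [hmz, pow_zero, congrFun (dmulti_zero_idx (B ρ)) p]
        by_cases hσ0 : c.2 = 0
        · rw [if_pos hσ0, if_pos hσ0, hρσ, hσ0, hmz, pow_zero,
            congrFun (dmulti_zero_idx (B ρ)) p]
          ring
        · rw [if_neg hσ0, if_neg hσ0]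
          ring
      · have hρσ : ρ.2 ≠ c.2 := fun hc => hτ0 ((midx_sub_eq_zero_iff hle).mpr hc)
        rw [if_neg hτ0, if_neg hρσ]
        by_cases hσ0 : c.2 = 0
        · rw [if_pos hσ0, if_pos hσ0]
          rw [hσ0, midx_sub_zero ρ.2]
          ring
        · rw [if_neg hσ0, if_neg hσ0]
          ring
    -- assembling the Dimg sum
    have hmain : Dimg C c p = ∑ ρ ∈ S, (if ρ.1 = c.1 then ((if ρ.2 = c.2 then B ρ p else 0)
        - (if c.2 = 0 then (-1 : ℝ) ^ (mdeg ρ.2) * Dmulti ρ.2 (B ρ) p else 0)) else 0) := by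
      rw [Dimg]
      have e1 : ∀ a : Fin m,
          (-(if 1 ≤ c.2 a then C (c.1, c.2 - Pi.single a 1) a p else 0)
            - totalD a (C c a) p)
          = ∑ ρ ∈ S, (-(if 1 ≤ c.2 a ∧ ρ.1 = c.1 ∧ c.2 ≤ ρ.2 then
              coefF (c.2 - Pi.single a 1) (ρ.2 - c.2) a
                * (-1 : ℝ) ^ (mdeg (ρ.2 - c.2))
                * Dmulti (ρ.2 - c.2) (B ρ) p
            else 0)
            - (if ρ.1 = c.1 ∧ c.2 + Pi.single a 1 ≤ ρ.2 then
              coefF c.2 (ρ.2 - c.2 - Pi.single a 1) a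
                * (-1 : ℝ) ^ (mdeg (ρ.2 - c.2 - Pi.single a 1))
                * Dmulti (ρ.2 - c.2) (B ρ) p
            else 0)) := by
        intro a
        rw [hCneg a, hDC a, ← Finset.sum_neg_distrib, ← Finset.sum_sub_distrib]
      rw [Finset.sum_congr rfl (fun a _ => e1 a), Finset.sum_comm]
      exact Finset.sum_congr rfl hper
    rw [hmain]
    -- split the sum
    have hsplit : ∀ ρ : Fin n × MIdx m,
        (if ρ.1 = c.1 then ((if ρ.2 = c.2 then B ρ p else 0)
          - (if c.2 = 0 then (-1 : ℝ) ^ (mdeg ρ.2) * Dmulti ρ.2 (B ρ) p else 0)) else 0)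
        = (if ρ = c then B ρ p else 0)
          - (if ρ.1 = c.1 then (if c.2 = 0 then (-1 : ℝ) ^ (mdeg ρ.2)
              * Dmulti ρ.2 (B ρ) p else 0) else 0) := by
      intro ρ
      by_cases hρμ : ρ.1 = c.1
      · rw [if_pos hρμ, if_pos hρμ]
        congr 1
        by_cases hρσ : ρ.2 = c.2
        · rw [if_pos hρσ, if_pos (Prod.ext hρμ hρσ)]
        · rw [if_neg hρσ, if_neg (fun hc => hρσ (by rw [hc]))]
      · rw [if_neg hρμ, if_neg hρμ, if_neg (fun hc => hρμ (by rw [hc])), sub_zero]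
    rw [Finset.sum_congr rfl (fun ρ _ => hsplit ρ), Finset.sum_sub_distrib]
    -- first piece
    have hfirst : ∑ ρ ∈ S, (if ρ = c then B ρ p else 0) = pd (Sum.inr c) L p := by
      rw [Finset.sum_ite_eq' S c (fun ρ => B ρ p)]
      by_cases hcS : c ∈ S
      · rw [if_pos hcS]
      · rw [if_neg hcS]
        exact (hp.pd_inr_eq_zero hcS p).symm
    -- second piece
    have hsecond : ∑ ρ ∈ S, (if ρ.1 = c.1 then (if c.2 = 0 then (-1 : ℝ) ^ (mdeg ρ.2)
          * Dmulti ρ.2 (B ρ) p else 0) else 0)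
        = (if c.2 = 0 then euler c.1 L p else 0) := by
      by_cases hc0 : c.2 = 0
      swap
      · rw [if_neg hc0]
        apply Finset.sum_eq_zero
        intro ρ _
        rw [if_neg hc0, ite_self]
      · rw [if_pos hc0]
        simp only [if_pos hc0]
        rw [euler]
        set Sm : Finset (MIdx m) := (S.filter (fun ρ => ρ.1 = c.1)).image Prod.snd with hSm
        have hside : ∀ κ ∉ Sm, (-1 : ℝ) ^ (mdeg κ)
            * Dmulti κ (pd (Sum.inr (c.1, κ)) L) p = 0 := by
          intro κ hκ
          have hnot : (c.1, κ) ∉ S := by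
            intro hmem
            exact hκ (Finset.mem_image.mpr ⟨(c.1, κ),
              Finset.mem_filter.mpr ⟨hmem, rfl⟩, rfl⟩)
          have hz : pd (Sum.inr (c.1, κ)) L = fun _ => (0:ℝ) :=
            funext (fun q => hp.pd_inr_eq_zero hnot q)
          rw [hz, congrFun (dmulti_zero_fun κ) p, mul_zero]
        rw [tsum_eq_sum hside, hSm]
        have hinj : ∀ x ∈ S.filter (fun ρ => ρ.1 = c.1),
            ∀ y ∈ S.filter (fun ρ => ρ.1 = c.1), x.2 = y.2 → x = y := by
          intro x hx y hy hxy
          have hx1 : x.1 = c.1 := (Finset.mem_filter.mp hx).2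
          have hy1 : y.1 = c.1 := (Finset.mem_filter.mp hy).2
          exact Prod.ext (hx1.trans hy1.symm) hxy
        rw [Finset.sum_image hinj]
        rw [Finset.sum_filter]
        apply Finset.sum_congr rfl
        intro ρ _
        by_cases hρ1 : ρ.1 = c.1
        · rw [if_pos hρ1, if_pos hρ1]
          have : ((c.1, ρ.2) : Fin n × MIdx m) = ρ := Prod.ext hρ1.symm rfl
          rw [this, hBdef]
        · rw [if_neg hρ1, if_neg hρ1]
    rw [hfirst, hsecond]
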